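/- Let G be a nilpotent subgroup of Homeo₊(ℝ) in which every element has a nonempty fixed point set, and suppose G has no global fixed point (Fix(G) = ∅). Then there exist subgroups A ⊴ B ≤ G with [B,B] ≤ A, a closed bounded interval I₀ with Fix(A) ∩ I₀ = End(I₀), and an infinite tower (Iᵢ, hᵢ)_{i≥1} with hᵢ ∈ B, I₀ ⊆ int(I₁), Iᵢ ⊆ int(I_{i+1}), and Fix(hᵢ) ∩ Iᵢ = End(Iᵢ) for all i. -/

import Mathlib

/-!
A nilpotent group contains no crossed pair. If `g` pushes an endpoint `x` of a gap of `f` into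
the gap, then for the right choice `φ = f^{±1}` a high power `φ^N` contracts `[x, e]` into
`[x, g x)` while `g φ^M` maps it into `[g x, e]`: a ping-pong pair, which is impossible because
Mal'cev's identity makes two words with different first letters agree in a nilpotent group.

Let `B ⊵ A` be consecutive terms of the lower central series of `G`, where the common fixed point
set first becomes nonempty (if `A` is trivial, `B` is abelian and a cyclic subgroup of `B`
replaces `A`). `B` has no global fixed point, so without crossings every fixed point set of an
element of `B` is unbounded on both sides. An element of `B` moving both ends of a gap `[p, q]`
(of `Fix A` or of an element of `B`) cannot fix a point inside it, for otherwise it or its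
inverse would push `p` into `(p, q)`; the component of the complement of its fixed point set
containing `[p, q]` is a strictly larger gap, and iterating builds the tower.
-/
open Set MeasureTheory
open scoped NNReal

/-- Orientation-preserving homeomorphisms of ℝ, modelled as order-isomorphisms of ℝ
(every order-isomorphism of ℝ is a strictly increasing homeomorphism and conversely). -/
abbrev HomeoR := ℝ ≃o ℝ

/-- The fixed point set of `f`. -/
def FixSet (f : HomeoR) : Set ℝ := {x : ℝ | f x = x}

/-- `f` and `g` are crossed with `f` in the distinguished role: there is an interval
`(a,b)` with endpoints possibly `±∞` such that `Fix(f) ∩ [a,b] = {a,b}` while `g`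
maps `a` or `b` into `(a,b)`. -/
def CrossedAt (f g : HomeoR) : Prop :=
  ∃ a b : EReal, a < b ∧
    ({x : ℝ | a ≤ (x : EReal) ∧ (x : EReal) ≤ b} ∩ FixSet f
      = {x : ℝ | (x : EReal) = a ∨ (x : EReal) = b}) ∧
    (∃ x : ℝ, ((x : EReal) = a ∨ (x : EReal) = b) ∧
      a < (g x : EReal) ∧ (g x : EReal) < b)

/-- Two elements are crossed. -/
def Crossed (f g : HomeoR) : Prop := CrossedAt f g ∨ CrossedAt g f

/-- `μ` is a (nonzero) `G`-invariant Radon measure on ℝ. -/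
def InvariantRadon (G : Subgroup HomeoR) (μ : Measure ℝ) : Prop :=
  μ ≠ 0 ∧ IsFiniteMeasureOnCompacts μ ∧ ∀ g ∈ G, Measure.map (⇑g) μ = μ

/-- `Λ` is a nonempty minimal closed `G`-invariant subset of ℝ. -/
def MinimalSet (G : Subgroup HomeoR) (Λ : Set ℝ) : Prop :=
  Λ.Nonempty ∧ IsClosed Λ ∧ (∀ g ∈ G, ⇑g '' Λ = Λ) ∧
    ∀ Λ' ⊆ Λ, Λ'.Nonempty → IsClosed Λ' → (∀ g ∈ G, ⇑g '' Λ' = Λ') → Λ' = Λ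

open Filter Topology OrderDual
open scoped commutatorElement

def malcevPair {H : Type*} [Group H] : ℕ → H → H → H × H
  | 0, x, y => (x, y)
  | n + 1, x, y => ((malcevPair n x y).1 * (malcevPair n x y).2,
      (malcevPair n x y).2 * (malcevPair n x y).1)

theorem malcevPair_fst_mul_inv_snd_mem {H : Type*} [Group H] (n : ℕ) (x y : H) :
    (malcevPair n x y).1 * (malcevPair n x y).2⁻¹ ∈ (⊤ : Subgroup H).lowerCentralSeries n := by
  induction n with
  | zero => simp
  | succ n ih =>
    set u := (malcevPair n x y).1
    set v := (malcevPair n x y).2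
    have h : (malcevPair (n + 1) x y).1 * (malcevPair (n + 1) x y).2⁻¹ = ⁅u * v⁻¹, v⁆ := by
      show u * v * (v * u)⁻¹ = _
      rw [commutatorElement_def]
      group
    rw [h, Subgroup.lowerCentralSeries_succ]
    exact Subgroup.commutator_mem_commutator ih (Subgroup.mem_top v)

theorem Group.IsNilpotent.exists_malcevPair_fst_eq_snd {H : Type*} [Group H]
    (hH : Group.IsNilpotent H) : ∃ n, ∀ x y : H, (malcevPair n x y).1 = (malcevPair n x y).2 := by
  obtain ⟨n, hn⟩ := Subgroup.nilpotent_iff_lowerCentralSeries.mp hH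
  refine ⟨n, fun x y => mul_inv_eq_one.mp ?_⟩
  simpa [hn] using malcevPair_fst_mul_inv_snd_mem n x y

/-- This ping-pong configuration would make `s` and `t` generate a free semigroup. -/
theorem Group.IsNilpotent.not_pingPong {H β : Type*} [Group H] [MulAction H β]
    (hH : Group.IsNilpotent H) {s t : H} {K U V : Set β} (hK : K.Nonempty) (hUK : U ⊆ K)
    (hVK : V ⊆ K) (hUV : Disjoint U V) (hs : MapsTo (s • ·) K U) (ht : MapsTo (t • ·) K V) :
    False := by
  obtain ⟨n, hn⟩ := hH.exists_malcevPair_fst_eq_snd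
  have key : ∀ m, MapsTo ((malcevPair m s t).1 • ·) K U ∧
      MapsTo ((malcevPair m s t).2 • ·) K V := by
    intro m
    induction m with
    | zero => exact ⟨hs, ht⟩
    | succ m ih =>
      simp only [malcevPair, mul_smul]
      exact ⟨ih.1.comp (ih.2.mono_right hVK), ih.2.comp (ih.1.mono_right hUK)⟩
  obtain ⟨z, hz⟩ := hK
  exact hUV.ne_of_mem ((key n).1 hz) ((key n).2 hz) (by rw [hn])

theorem IsPreconnected.forall_lt_or_forall_lt {X α : Type*} [TopologicalSpace X] [LinearOrder α]
    [TopologicalSpace α] [OrderClosedTopology α] {s : Set X} (hs : IsPreconnected s)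
    {f g : X → α} (hf : ContinuousOn f s) (hg : ContinuousOn g s) (hne : ∀ x ∈ s, f x ≠ g x) :
    (∀ x ∈ s, f x < g x) ∨ ∀ x ∈ s, g x < f x := by
  by_contra! h
  obtain ⟨⟨a, ha, hga⟩, ⟨b, hb, hfb⟩⟩ := h
  obtain ⟨x, hx, hfx⟩ := hs.intermediate_value₂ hb ha hf hg hfb hga
  exact hne x hx hfx

theorem IsClosed.exists_gap {α : Type*} [ConditionallyCompleteLinearOrder α] [TopologicalSpace α]
    [OrderTopology α] {S : Set α} (hS : IsClosed S) (hSa : ¬BddAbove S) (hSb : ¬BddBelow S)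
    {p q : α} (hpq : p ≤ q) (hSpq : S ∩ Icc p q = ∅) :
    ∃ P Q, P < p ∧ q < Q ∧ S ∩ Icc P Q = {P, Q} := by
  obtain ⟨y, hyS, hyp⟩ := not_bddBelow_iff.mp hSb p
  obtain ⟨z, hzS, hqz⟩ := not_bddAbove_iff.mp hSa q
  have hP := (hS.inter isClosed_Iic).isGreatest_csSup ⟨y, hyS, hyp.le⟩ ⟨p, fun _ h => h.2⟩
  have hQ := (hS.inter isClosed_Ici).isLeast_csInf ⟨z, hzS, hqz.le⟩ ⟨q, fun _ h => h.2⟩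
  set P := sSup (S ∩ Iic p)
  set Q := sInf (S ∩ Ici q)
  have hnot : ∀ x ∈ S, p ≤ x → x ≤ q → False := fun x hx h1 h2 =>
    (Set.eq_empty_iff_forall_notMem.mp hSpq x) ⟨hx, h1, h2⟩
  have hPp : P < p := hP.1.2.lt_of_ne fun h => hnot P hP.1.1 h.ge (h ▸ hpq)
  have hqQ : q < Q := hQ.1.2.lt_of_ne' fun h => hnot Q hQ.1.1 (h ▸ hpq) h.le
  refine ⟨P, Q, hPp, hqQ, Set.ext fun x => ⟨fun ⟨hx, hPx, hxQ⟩ => ?_, ?_⟩⟩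
  · rcases le_or_gt x p with hxp | hpx
    · exact Or.inl (le_antisymm (hP.2 ⟨hx, hxp⟩) hPx)
    rcases le_or_gt q x with hqx | hxq
    · exact Or.inr (le_antisymm hxQ (hQ.2 ⟨hx, hqx⟩))
    · exact (hnot x hx hpx.le hxq.le).elim
  · rintro (rfl | rfl)
    · exact ⟨hP.1.1, le_rfl, (hPp.trans_le (hpq.trans hqQ.le)).le⟩
    · exact ⟨hQ.1.1, ((hPp.trans_le hpq).trans hqQ).le, le_rfl⟩

theorem exists_iterate_mapsTo_of_forall_lt {α : Type*} [ConditionallyCompleteLinearOrder α]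
    [TopologicalSpace α] [OrderTopology α] {φ g : α → α} (hφc : Continuous φ) (hφm : Monotone φ)
    (hgc : Continuous g) (hgm : Monotone g) {x e : α} (hφx : φ x = x)
    (hφ : ∀ y ∈ Ioc x e, φ y < y) (hxg : x < g x) (hge : g x < e) :
    ∃ N M : ℕ, MapsTo φ^[N] (Icc x e) (Ico x (g x)) ∧
      MapsTo (g ∘ φ^[M]) (Icc x e) (Icc (g x) e) := by
  have hle : ∀ y ∈ Icc x e, φ y ≤ y := fun y hy =>
    hy.1.eq_or_lt.elim (fun h => by rw [← h, hφx]) fun h => (hφ y ⟨h, hy.2⟩).le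
  have hmaps : MapsTo φ (Icc x e) (Icc x e) := fun y hy =>
    ⟨hφx ▸ hφm hy.1, (hle y hy).trans hy.2⟩
  have he : e ∈ Icc x e := ⟨(hxg.trans hge).le, le_rfl⟩
  set o : ℕ → α := fun n => φ^[n] e
  have ho : ∀ n, o n ∈ Icc x e := fun n => hmaps.iterate n he
  have hanti : Antitone o := antitone_nat_of_succ_le fun n => by
    simpa only [o, Function.iterate_succ_apply'] using hle _ (ho n)
  -- the orbit of `e` decreases to a fixed point of `φ` in `[x, e]`, which can only be `x`
  have hlim : Tendsto o atTop (𝓝 x) := by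
    have hconv := tendsto_atTop_ciInf hanti ⟨x, by rintro _ ⟨n, rfl⟩; exact (ho n).1⟩
    have hmem : (⨅ n, o n) ∈ Icc x e := isClosed_Icc.mem_of_tendsto hconv (Eventually.of_forall ho)
    have hfix : φ (⨅ n, o n) = ⨅ n, o n := isFixedPt_of_tendsto_iterate hconv hφc.continuousAt
    obtain h | h := hmem.1.eq_or_lt
    · rwa [← h] at hconv
    · exact absurd hfix (hφ _ ⟨h, hmem.2⟩).ne
  obtain ⟨N, hN⟩ := (hlim.eventually_lt_const hxg).exists
  obtain ⟨M, hM⟩ := (((hgc.tendsto x).comp hlim).eventually_lt_const hge).exists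
  refine ⟨N, M, fun y hy => ⟨(hmaps.iterate N hy).1, (hφm.iterate N hy.2).trans_lt hN⟩,
    fun y hy => ⟨hgm (hmaps.iterate M hy).1, (hgm (hφm.iterate M hy.2)).trans hM.le⟩⟩

theorem RelIso.coe_pow {α : Type*} {r : α → α → Prop} (f : r ≃r r) (n : ℕ) :
    ⇑(f ^ n) = f^[n] := by
  induction n with
  | zero => rfl
  | succ n ih => rw [pow_succ, RelIso.coe_mul, ih, Function.iterate_succ]

theorem isClosed_fixSet (f : HomeoR) : IsClosed (FixSet f) :=
  isClosed_eq f.continuous continuous_id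

theorem crossedAt_of_gap {f g : HomeoR} {p q : ℝ} (hpq : p < q)
    (hgap : FixSet f ∩ Icc p q = {p, q}) (hgp : g p ∈ Ioo p q) : CrossedAt f g := by
  refine ⟨p, q, EReal.coe_lt_coe hpq, ?_, p, Or.inl rfl, EReal.coe_lt_coe hgp.1,
    EReal.coe_lt_coe hgp.2⟩
  ext y
  simpa [and_comm] using Set.ext_iff.mp hgap y

theorem crossedAt_of_isGreatest {f g : HomeoR} {P : ℝ} (hP : IsGreatest (FixSet f) P)
    (hgP : P < g P) : CrossedAt f g := by
  refine ⟨P, ⊤, EReal.coe_lt_top P, ?_, P, Or.inl rfl, EReal.coe_lt_coe hgP, EReal.coe_lt_top _⟩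
  ext y
  simp only [mem_inter_iff, mem_ofPred_eq, le_top, and_true, EReal.coe_le_coe_iff,
    EReal.coe_eq_coe_iff, EReal.coe_ne_top, or_false]
  exact ⟨fun h => le_antisymm (hP.2 h.2) h.1, by rintro rfl; exact ⟨le_rfl, hP.1⟩⟩

theorem crossedAt_of_isLeast {f g : HomeoR} {P : ℝ} (hP : IsLeast (FixSet f) P)
    (hgP : g P < P) : CrossedAt f g := by
  refine ⟨⊥, P, EReal.bot_lt_coe P, ?_, P, Or.inr rfl, EReal.bot_lt_coe _, EReal.coe_lt_coe hgP⟩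
  ext y
  simp only [mem_inter_iff, mem_ofPred_eq, bot_le, true_and, EReal.coe_le_coe_iff,
    EReal.coe_eq_coe_iff, EReal.coe_ne_bot, false_or]
  exact ⟨fun h => le_antisymm h.1 (hP.2 h.2), by rintro rfl; exact ⟨le_rfl, hP.1⟩⟩

theorem Subgroup.isNilpotent_of_le {H : Type*} [Group H] {K L : Subgroup H} (hKL : K ≤ L)
    (hL : Group.IsNilpotent L) : Group.IsNilpotent K := by
  obtain ⟨n, hn⟩ := (Subgroup.isNilpotent_iff_lowerCentralSeries L).mp hL
  exact (Subgroup.isNilpotent_iff_lowerCentralSeries K).mpr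
    ⟨n, le_bot_iff.mp (hn ▸ Subgroup.lowerCentralSeries_mono n hKL)⟩

section Nilpotent

variable {G : Subgroup HomeoR} (hG : Group.IsNilpotent G)
include hG

theorem apply_notMem_Ioo_of_forall_lt {φ g : HomeoR} (hφG : φ ∈ G) (hg : g ∈ G) {x e : ℝ}
    (hφx : φ x = x) (hφ : ∀ y ∈ Ioc x e, φ y < y) : g x ∉ Ioo x e := fun ⟨hxg, hge⟩ => by
  obtain ⟨N, M, hN, hM⟩ := exists_iterate_mapsTo_of_forall_lt φ.continuous φ.monotone
    g.continuous g.monotone hφx hφ hxg hge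
  rw [← RelIso.coe_pow] at hN
  rw [← RelIso.coe_pow, ← RelIso.coe_mul] at hM
  exact hG.not_pingPong (s := ⟨φ ^ N, pow_mem hφG N⟩)
    (t := ⟨g * φ ^ M, mul_mem hg (pow_mem hφG M)⟩) (K := Icc x e)
    (nonempty_Icc.mpr (hxg.trans hge).le) (fun y hy => ⟨hy.1, (hy.2.trans hge).le⟩)
    (Icc_subset_Icc_left hxg.le) (disjoint_left.mpr fun y h1 h2 => h1.2.not_ge h2.1) hN hM

theorem apply_notMem_Ioo_of_forall_gt {φ g : HomeoR} (hφG : φ ∈ G) (hg : g ∈ G) {e x : ℝ}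
    (hφx : φ x = x) (hφ : ∀ y ∈ Ico e x, y < φ y) : g x ∉ Ioo e x := fun ⟨heg, hgx⟩ => by
  obtain ⟨N, M, hN, hM⟩ := exists_iterate_mapsTo_of_forall_lt (α := ℝᵒᵈ)
    (φ := toDual ∘ φ ∘ ofDual) (g := toDual ∘ g ∘ ofDual) (x := toDual x) (e := toDual e)
    (continuous_toDual.comp (φ.continuous.comp continuous_ofDual)) φ.monotone.dual
    (continuous_toDual.comp (g.continuous.comp continuous_ofDual)) g.monotone.dual hφx
    (fun y hy => hφ (ofDual y) ⟨hy.2, hy.1⟩) hgx heg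
  replace hN : MapsTo φ^[N] (Icc e x) (Ioc (g x) x) := fun y hy => (hN ⟨hy.2, hy.1⟩).symm
  replace hM : MapsTo (g ∘ φ^[M]) (Icc e x) (Icc e (g x)) := fun y hy => (hM ⟨hy.2, hy.1⟩).symm
  rw [← RelIso.coe_pow] at hN
  rw [← RelIso.coe_pow, ← RelIso.coe_mul] at hM
  exact hG.not_pingPong (s := ⟨φ ^ N, pow_mem hφG N⟩)
    (t := ⟨g * φ ^ M, mul_mem hg (pow_mem hφG M)⟩) (K := Icc e x)
    (nonempty_Icc.mpr (heg.trans hgx).le) (fun y hy => ⟨(heg.trans hy.1).le, hy.2⟩)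
    (Icc_subset_Icc_right hgx.le) (disjoint_left.mpr fun y h1 h2 => h1.1.not_ge h2.2) hN hM

theorem not_crossedAt {f g : HomeoR} (hf : f ∈ G) (hg : g ∈ G) : ¬CrossedAt f g := by
  rintro ⟨a, b, hab, hgap, x, hx, hagx, hgxb⟩
  set J : Set ℝ := {y | a < y ∧ y < b}
  have hfx : f x = x := (hgap.superset hx).2
  have hne : ∀ y ∈ J, f y ≠ y := fun y hy h =>
    (hgap.subset ⟨⟨hy.1.le, hy.2.le⟩, h⟩ : (y : EReal) = a ∨ (y : EReal) = b).elim
      hy.1.ne' hy.2.ne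
  have hJ : IsPreconnected J :=
    (ordConnected_Ioo.preimage_mono EReal.coe_strictMono.monotone).isPreconnected
  obtain ⟨φ, hφG, hφx, hφ, ψ, hψG, hψx, hψ⟩ : ∃ φ ∈ G, φ x = x ∧ (∀ y ∈ J, φ y < y) ∧
      ∃ ψ ∈ G, ψ x = x ∧ ∀ y ∈ J, y < ψ y := by
    have hfx' : f⁻¹ x = x := f.symm_apply_eq.mpr hfx.symm
    rcases hJ.forall_lt_or_forall_lt f.continuous.continuousOn continuousOn_id hne with h | h
    · exact ⟨f, hf, hfx, h, f⁻¹, inv_mem hf, hfx', fun y hy => f.lt_symm_apply.mpr (h y hy)⟩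
    · exact ⟨f⁻¹, inv_mem hf, hfx', fun y hy => f.symm_apply_lt.mpr (h y hy), f, hf, hfx, h⟩
  rcases hx with rfl | rfl
  · obtain ⟨e, hgxe, heb⟩ := EReal.lt_iff_exists_real_btwn.mp hgxb
    exact apply_notMem_Ioo_of_forall_lt hG hφG hg hφx
      (fun y hy => hφ y ⟨EReal.coe_lt_coe hy.1, (EReal.coe_le_coe hy.2).trans_lt heb⟩)
      ⟨EReal.coe_lt_coe_iff.mp hagx, EReal.coe_lt_coe_iff.mp hgxe⟩
  · obtain ⟨e, hae, hegx⟩ := EReal.lt_iff_exists_real_btwn.mp hagx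
    exact apply_notMem_Ioo_of_forall_gt hG hψG hg hψx
      (fun y hy => hψ y ⟨hae.trans_le (EReal.coe_le_coe hy.1), EReal.coe_lt_coe hy.2⟩)
      ⟨EReal.coe_lt_coe_iff.mp hegx, EReal.coe_lt_coe_iff.mp hgxb⟩

theorem apply_notMem_Ioo_of_gap {f g : HomeoR} (hf : f ∈ G) (hg : g ∈ G) {p q : ℝ}
    (hpq : p < q) (hgap : FixSet f ∩ Icc p q = {p, q}) : g p ∉ Ioo p q := fun h =>
  not_crossedAt hG hf hg (crossedAt_of_gap hpq hgap h)

theorem apply_eq_of_isGreatest_fixSet {f g : HomeoR} (hf : f ∈ G) (hg : g ∈ G) {P : ℝ}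
    (hP : IsGreatest (FixSet f) P) : g P = P := by
  by_contra hne
  rcases lt_or_gt_of_ne hne with h | h
  · exact not_crossedAt hG hf (inv_mem hg) (crossedAt_of_isGreatest hP (g.lt_symm_apply.mpr h))
  · exact not_crossedAt hG hf hg (crossedAt_of_isGreatest hP h)

theorem apply_eq_of_isLeast_fixSet {f g : HomeoR} (hf : f ∈ G) (hg : g ∈ G) {P : ℝ}
    (hP : IsLeast (FixSet f) P) : g P = P := by
  by_contra hne
  rcases lt_or_gt_of_ne hne with h | h
  · exact not_crossedAt hG hf hg (crossedAt_of_isLeast hP h)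
  · exact not_crossedAt hG hf (inv_mem hg) (crossedAt_of_isLeast hP (g.symm_apply_lt.mpr h))

variable (hmove : ∀ x, ∃ k ∈ G, k x ≠ x)
include hmove

theorem not_bddAbove_fixSet {f : HomeoR} (hf : f ∈ G) (hne : (FixSet f).Nonempty) :
    ¬BddAbove (FixSet f) := fun hbdd => by
  obtain ⟨k, hk, hkP⟩ := hmove (sSup (FixSet f))
  exact hkP (apply_eq_of_isGreatest_fixSet hG hf hk ((isClosed_fixSet f).isGreatest_csSup hne hbdd))

theorem not_bddBelow_fixSet {f : HomeoR} (hf : f ∈ G) (hne : (FixSet f).Nonempty) :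
    ¬BddBelow (FixSet f) := fun hbdd => by
  obtain ⟨k, hk, hkP⟩ := hmove (sInf (FixSet f))
  exact hkP (apply_eq_of_isLeast_fixSet hG hf hk ((isClosed_fixSet f).isLeast_csInf hne hbdd))

end Nilpotent

section Invariant

variable {B : Subgroup HomeoR} (hmove : ∀ x, ∃ k ∈ B, k x ≠ x)
include hmove

theorem not_bddAbove_of_mapsTo {S : Set ℝ} (hS : IsClosed S) (hne : S.Nonempty)
    (hinv : ∀ k ∈ B, MapsTo k S S) : ¬BddAbove S := fun hbdd => by
  have hP := hS.isGreatest_csSup hne hbdd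
  obtain ⟨k, hk, hkP⟩ := hmove (sSup S)
  exact hkP (le_antisymm (hP.2 (hinv k hk hP.1))
    (k.symm_apply_le.mp (hP.2 (hinv k⁻¹ (inv_mem hk) hP.1))))

theorem not_bddBelow_of_mapsTo {S : Set ℝ} (hS : IsClosed S) (hne : S.Nonempty)
    (hinv : ∀ k ∈ B, MapsTo k S S) : ¬BddBelow S := fun hbdd => by
  have hP := hS.isLeast_csInf hne hbdd
  obtain ⟨k, hk, hkP⟩ := hmove (sInf S)
  exact hkP (le_antisymm (k.le_symm_apply.mp (hP.2 (hinv k⁻¹ (inv_mem hk) hP.1)))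
    (hP.2 (hinv k hk hP.1)))

end Invariant

theorem notMem_Ioo_of_inter_Icc_eq_pair {α : Type*} [Preorder α] {S : Set α} {u v y : α}
    (hS : S ∩ Icc u v = {u, v}) (hy : y ∈ S) : y ∉ Ioo u v := fun h => by
  have hy' : y ∈ S ∩ Icc u v := ⟨hy, Ioo_subset_Icc_self h⟩
  rw [hS] at hy'
  rcases hy' with rfl | rfl
  · exact lt_irrefl _ h.1
  · exact lt_irrefl _ h.2

theorem fixSet_inter_Icc_eq_empty {g : HomeoR} {p q : ℝ} (hgp : g p ≠ p) (hgq : g q ≠ q)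
    (hg : g p ∉ Ioo p q) (hg' : g⁻¹ p ∉ Ioo p q) : FixSet g ∩ Icc p q = ∅ := by
  refine eq_empty_of_forall_notMem fun x ⟨(hx : g x = x), hpx, hxq⟩ => ?_
  replace hpx : p < x := hpx.lt_of_ne (by rintro rfl; exact hgp hx)
  replace hxq : x < q := hxq.lt_of_ne (by rintro rfl; exact hgq hx)
  -- whichever of `g`, `g⁻¹` moves `p` to the right keeps it below their common fixed point `x`
  rcases lt_or_gt_of_ne hgp with h | h
  · have hx' : g⁻¹ x = x := g.symm_apply_eq.mpr hx.symm
    exact hg' ⟨g.lt_symm_apply.mpr h, ((g⁻¹).strictMono hpx).trans_le (hx'.le.trans hxq.le)⟩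
  · exact hg ⟨h, (g.strictMono hpx).trans_le (hx.le.trans hxq.le)⟩

theorem Subgroup.exists_smul_ne_and_smul_ne {H β : Type*} [Group H] [MulAction H β]
    {B : Subgroup H} (hmove : ∀ x : β, ∃ k ∈ B, k • x ≠ x) (p q : β) :
    ∃ k ∈ B, k • p ≠ p ∧ k • q ≠ q := by
  obtain ⟨k₁, hk₁, hp₁⟩ := hmove p
  by_cases hq₁ : k₁ • q = q
  · obtain ⟨k₂, hk₂, hq₂⟩ := hmove q
    by_cases hp₂ : k₂ • p = p
    · refine ⟨k₁ * k₂, mul_mem hk₁ hk₂, by rwa [mul_smul, hp₂], fun h => hq₂ ?_⟩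
      rw [mul_smul] at h
      exact smul_left_cancel k₁ (h.trans hq₁.symm)
    · exact ⟨k₂, hk₂, hp₂, hq₂⟩
  · exact ⟨k₁, hk₁, hp₁, hq₁⟩

theorem exists_fixSet_gap_superset {B : Subgroup HomeoR} (hB : Group.IsNilpotent B)
    (hmove : ∀ x, ∃ k ∈ B, k x ≠ x) (hfix : ∀ g ∈ B, (FixSet g).Nonempty) {p q : ℝ}
    (hpq : p < q) (hgap : ∀ k ∈ B, k p ∉ Ioo p q) :
    ∃ h ∈ B, ∃ P Q, P < p ∧ q < Q ∧ FixSet h ∩ Icc P Q = {P, Q} := by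
  obtain ⟨g, hg, hgp, hgq⟩ := Subgroup.exists_smul_ne_and_smul_ne hmove p q
  have hempty := fixSet_inter_Icc_eq_empty hgp hgq (hgap g hg) (hgap g⁻¹ (inv_mem hg))
  exact ⟨g, hg, (isClosed_fixSet g).exists_gap (not_bddAbove_fixSet hB hmove hg (hfix g hg))
    (not_bddBelow_fixSet hB hmove hg (hfix g hg)) hpq.le hempty⟩

theorem mapsTo_iInter_fixSet {A B : Subgroup HomeoR}
    (hnorm : ∀ b ∈ B, ∀ a ∈ A, b * a * b⁻¹ ∈ A) {b : HomeoR} (hb : b ∈ B) :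
    MapsTo b (⋂ f ∈ A, FixSet f) (⋂ f ∈ A, FixSet f) := by
  intro y hy
  simp only [mem_iInter₂] at hy ⊢
  intro a ha
  have hy' : (b⁻¹ * a * b) y = y := hy _ (by simpa using hnorm b⁻¹ (inv_mem hb) a ha)
  calc a (b y) = b ((b⁻¹ * a * b) y) := by simp [RelIso.mul_apply]
    _ = b y := by rw [hy']

theorem exists_gap_iInter_fixSet {A B : Subgroup HomeoR}
    (hnorm : ∀ b ∈ B, ∀ a ∈ A, b * a * b⁻¹ ∈ A) (hmove : ∀ x, ∃ k ∈ B, k x ≠ x)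
    (hne : (⋂ f ∈ A, FixSet f).Nonempty) {w : ℝ} (hw : w ∉ ⋂ f ∈ A, FixSet f) :
    ∃ u v, u < v ∧ (⋂ f ∈ A, FixSet f) ∩ Icc u v = {u, v} := by
  have hcl : IsClosed (⋂ f ∈ A, FixSet f) := isClosed_biInter fun f _ => isClosed_fixSet f
  have hinv := fun k (hk : k ∈ B) => mapsTo_iInter_fixSet hnorm hk
  obtain ⟨u, v, hu, hv, hgap⟩ := hcl.exists_gap (not_bddAbove_of_mapsTo hmove hcl hne hinv)
    (not_bddBelow_of_mapsTo hmove hcl hne hinv) le_rfl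
    (by rwa [Icc_self, inter_singleton_eq_empty])
  exact ⟨u, v, hu.trans hv, hgap⟩

theorem exists_subgroup_pair_of_isNilpotent {G : Subgroup HomeoR} (hG : Group.IsNilpotent G)
    (hglob : (⋂ g ∈ G, FixSet g) = ∅) :
    ∃ A B : Subgroup HomeoR, A ≤ B ∧ B ≤ G ∧ (∀ b ∈ B, ∀ a ∈ A, b * a * b⁻¹ ∈ A) ∧
      (∀ x ∈ B, ∀ y ∈ B, x * y * x⁻¹ * y⁻¹ ∈ A) ∧ (∀ x, ∃ k ∈ B, k x ≠ x) ∧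
      (⋂ f ∈ A, FixSet f).Nonempty := by
  obtain ⟨n, hn, hn1⟩ := Nat.exists_not_and_succ_of_not_zero_of_exists
    (p := fun n => (⋂ f ∈ G.lowerCentralSeries n, FixSet f).Nonempty) (by simp [hglob]) <| by
      obtain ⟨n, hn⟩ := (Subgroup.isNilpotent_iff_lowerCentralSeries G).mp hG
      exact ⟨n, 0, by simp [hn, FixSet]⟩
  have hle := G.lowerCentralSeries_le_self n
  refine ⟨G.lowerCentralSeries (n + 1), G.lowerCentralSeries n,
    G.lowerCentralSeries_antitone n.le_succ, hle, fun b hb a ha => ?_, fun x hx y hy => ?_,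
    fun x => ?_, hn1⟩
  · exact (Subgroup.mem_normalizer_iff.mp
      (G.self_le_normalizer_lowerCentralSeries (n + 1) (hle hb)) a).mp ha
  · rw [← commutatorElement_def]
    exact Subgroup.commutator_mem_commutator hx (hle hy)
  · by_contra! h
    exact hn ⟨x, mem_iInter₂.mpr h⟩

theorem exists_subgroup_fixSet_gap {A B : Subgroup HomeoR} (hAB : A ≤ B)
    (hnorm : ∀ b ∈ B, ∀ a ∈ A, b * a * b⁻¹ ∈ A) (hcomm : ∀ x ∈ B, ∀ y ∈ B, x * y * x⁻¹ * y⁻¹ ∈ A)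
    (hmove : ∀ x, ∃ k ∈ B, k x ≠ x) (hfix : ∀ g ∈ B, (FixSet g).Nonempty)
    (hA : (⋂ f ∈ A, FixSet f).Nonempty) :
    ∃ A' ≤ B, (∀ b ∈ B, ∀ a ∈ A', b * a * b⁻¹ ∈ A') ∧
      (∀ x ∈ B, ∀ y ∈ B, x * y * x⁻¹ * y⁻¹ ∈ A') ∧
      ∃ u v, u < v ∧ (⋂ f ∈ A', FixSet f) ∩ Icc u v = {u, v} := by
  by_cases hAuniv : ∀ z, z ∈ ⋂ f ∈ A, FixSet f
  swap
  · obtain ⟨w, hw⟩ := not_forall.mp hAuniv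
    exact ⟨A, hAB, hnorm, hcomm, exists_gap_iInter_fixSet hnorm hmove hA hw⟩
  -- `A` is trivial, so `B` is abelian and its cyclic subgroups will do
  have hBcomm : ∀ x ∈ B, ∀ y ∈ B, x * y = y * x := fun x hx y hy => by
    rw [← commutatorElement_eq_one_iff_mul_comm, commutatorElement_def]
    exact RelIso.ext fun z => mem_iInter₂.mp (hAuniv z) _ (hcomm x hx y hy)
  obtain ⟨f, hf, hf0⟩ := hmove 0
  have hfB : Subgroup.zpowers f ≤ B := Subgroup.zpowers_le.mpr hf
  have hnorm' : ∀ b ∈ B, ∀ a ∈ Subgroup.zpowers f, b * a * b⁻¹ ∈ Subgroup.zpowers f :=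
    fun b hb a ha => by rwa [hBcomm b hb a (hfB ha), mul_inv_cancel_right]
  refine ⟨Subgroup.zpowers f, hfB, hnorm', fun x hx y hy => ?_,
    exists_gap_iInter_fixSet hnorm' hmove ?_ (w := 0) ?_⟩
  · rw [← commutatorElement_def, commutatorElement_eq_one_iff_mul_comm.mpr (hBcomm x hx y hy)]
    exact one_mem _
  · obtain ⟨y, hy⟩ := hfix f hf
    refine ⟨y, mem_iInter₂.mpr fun a ha => ?_⟩
    obtain ⟨k, rfl⟩ := Subgroup.mem_zpowers_iff.mp ha
    exact MulAction.mem_fixedBy_zpow (α := ℝ) (g := f) hy k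
  · exact fun h => hf0 (mem_iInter₂.mp h f (Subgroup.mem_zpowers f))

theorem exists_seq_of_forall_exists {β : Type*} {Q : β → Prop} {R : β → β → Prop}
    (hstep : ∀ x, Q x → ∃ y, Q y ∧ R x y) {x₀ : β} (h₀ : Q x₀) :
    ∃ s : ℕ → β, s 0 = x₀ ∧ ∀ n, Q (s n) ∧ R (s n) (s (n + 1)) := by
  choose next hnextQ hnextR using hstep
  let s : ℕ → {x // Q x} := fun n =>
    Nat.rec ⟨x₀, h₀⟩ (fun _ x => ⟨next x.1 x.2, hnextQ x.1 x.2⟩) n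
  exact ⟨fun n => (s n).1, rfl, fun n => ⟨(s n).2, hnextR (s n).1 (s n).2⟩⟩

theorem nilpotent_tower (G : Subgroup HomeoR) (hnilp : Group.IsNilpotent ↥G)
    (hfix : ∀ g ∈ G, (FixSet g).Nonempty)
    (hglob : (⋂ g ∈ G, FixSet g) = ∅) :
    ∃ (A B : Subgroup HomeoR), A ≤ B ∧ B ≤ G ∧
      (∀ b ∈ B, ∀ a ∈ A, b * a * b⁻¹ ∈ A) ∧
      (∀ x ∈ B, ∀ y ∈ B, x * y * x⁻¹ * y⁻¹ ∈ A) ∧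
      ∃ (a b : ℕ → ℝ) (h : ℕ → HomeoR),
        (∀ i, a i < b i) ∧
        (∀ i : ℕ, h (i+1) ∈ B) ∧
        (∀ i, Icc (a i) (b i) ⊆ Ioo (a (i+1)) (b (i+1))) ∧
        ((⋂ f ∈ A, FixSet f) ∩ Icc (a 0) (b 0) = {a 0, b 0}) ∧
        (∀ i : ℕ, FixSet (h (i+1)) ∩ Icc (a (i+1)) (b (i+1)) = {a (i+1), b (i+1)}) := by
  obtain ⟨A₀, B, hA₀B, hBG, hnorm₀, hcomm₀, hmove, hA₀⟩ :=
    exists_subgroup_pair_of_isNilpotent hnilp hglob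
  have hB : Group.IsNilpotent B := Subgroup.isNilpotent_of_le hBG hnilp
  have hfixB : ∀ g ∈ B, (FixSet g).Nonempty := fun g hg => hfix g (hBG hg)
  obtain ⟨A, hAB, hnorm, hcomm, u, v, huv, hgapA⟩ :=
    exists_subgroup_fixSet_gap hA₀B hnorm₀ hcomm₀ hmove hfixB hA₀
  have hgap₀ : ∀ k ∈ B, k u ∉ Ioo u v := fun k hk => notMem_Ioo_of_inter_Icc_eq_pair hgapA
    (mapsTo_iInter_fixSet hnorm hk (hgapA.superset (mem_insert u _)).1)
  -- the tower grows through intervals `[p, q]` whose left end no element of `B` moves inside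
  obtain ⟨s, hs0, hs⟩ := exists_seq_of_forall_exists (β := ℝ × ℝ × HomeoR)
    (Q := fun t => t.1 < t.2.1 ∧ ∀ k ∈ B, k t.1 ∉ Ioo t.1 t.2.1)
    (R := fun t t' => t'.2.2 ∈ B ∧ Icc t.1 t.2.1 ⊆ Ioo t'.1 t'.2.1 ∧
      FixSet t'.2.2 ∩ Icc t'.1 t'.2.1 = {t'.1, t'.2.1})
    (fun t ⟨hpq, hgap⟩ => by
      obtain ⟨h, hh, P, Q, hP, hQ, hgapPQ⟩ := exists_fixSet_gap_superset hB hmove hfixB hpq hgap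
      have hPQ : P < Q := hP.trans (hpq.trans hQ)
      exact ⟨(P, Q, h), ⟨hPQ, fun k hk => apply_notMem_Ioo_of_gap hB hh hk hPQ hgapPQ⟩,
        hh, Icc_subset_Ioo hP hQ, hgapPQ⟩)
    (x₀ := (u, v, 1)) ⟨huv, hgap₀⟩
  exact ⟨A, B, hAB, hBG, hnorm, hcomm, fun i => (s i).1, fun i => (s i).2.1,
    fun i => (s i).2.2, fun i => (hs i).1.1, fun i => (hs i).2.1, fun i => (hs i).2.2.1,
    by simp only [hs0]; exact hgapA, fun i => (hs i).2.2.2⟩
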